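/- Let (Λ, φ) be a topological flow on a compact metric space, let γ ⊂ Λ be a closed orbit of φ with minimal period T₀ > 0, and let d₀ > 0. Then there exists d₁ > 0 such that: if ξ₁, ξ₂ are d₁-pseudotrajectories of φ and t₁, t₂ ∈ ℝ satisfy t₂ − t₁ ≥ T₀/d₁, dist(ξ₁(t₁), γ) < d₁ and dist(ξ₂(t₂), γ) < d₁, then there exists a d₀-pseudotrajectory ξ of φ with ξ(t) = ξ₁(t) for all t ≤ t₁, ξ(t) = ξ₂(t) for all t ≥ t₂, and ξ(t) ∈ γ for all t ∈ (t₁, t₂). -/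

import Mathlib

/-!
Choose points `φ a p` and `φ b p` of `γ` close to `ξ₁ t₁` and `ξ₂ t₂`. Since arrival times on
`γ` only matter modulo `T₀`, running along `γ` at a constant speed `σ` with
`|σ - 1| ≤ T₀ / (2 (t₂ - t₁)) ≤ d₁ / 2` leads from `φ a p` at time `t₁` to `φ b p` exactly at
time `t₂`, and for `σ` close to `1` this orbit segment is itself a pseudotrajectory.
Switching from one pseudotrajectory to another at a time where their values are close gives
again a pseudotrajectory, whose constant is controlled by the uniform continuity of `φ` on
`[0, 2] × Λ`; switching from `ξ₁` to the orbit segment at `t₁` and to `ξ₂` at `t₂` proves the claim.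
-/

open Metric Set

/-- A topological flow: a continuous map `φ : ℝ × Λ → Λ` with `φ 0 x = x` and
`φ (s+t) x = φ s (φ t x)`. -/
def IsFlow {Λ : Type*} [TopologicalSpace Λ] (φ : ℝ → Λ → Λ) : Prop :=
  Continuous (fun q : ℝ × Λ => φ q.1 q.2) ∧ (∀ x, φ 0 x = x) ∧
    ∀ s t x, φ (s + t) x = φ s (φ t x)

/-- `ξ : ℝ → Λ` is a `d`-pseudotrajectory of the flow `φ`. -/
def IsPseudo {Λ : Type*} [MetricSpace Λ] (φ : ℝ → Λ → Λ) (d : ℝ) (ξ : ℝ → Λ) : Prop :=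
  ∀ t : ℝ, ∀ s ∈ Set.Icc (0 : ℝ) 1, dist (ξ (t + s)) (φ s (ξ t)) < d

/-- An orientation-preserving homeomorphism of `ℝ`. -/
def IsRep (f : ℝ → ℝ) : Prop :=
  Continuous f ∧ StrictMono f ∧ Function.Surjective f

/-- Membership in `Rep(ε)`. -/
def IsRepIn (ε : ℝ) (f : ℝ → ℝ) : Prop :=
  IsRep f ∧ ∀ a b : ℝ, b < a → |(f a - f b) / (a - b) - 1| < ε

/-- The standard shadowing property (on the whole space). -/
def StdShadowing {Λ : Type*} [MetricSpace Λ] (φ : ℝ → Λ → Λ) : Prop :=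
  ∀ ε > 0, ∃ d > 0, ∀ ξ : ℝ → Λ, IsPseudo φ d ξ →
    ∃ (x : Λ) (h : ℝ → ℝ), IsRepIn ε h ∧ ∀ t : ℝ, dist (ξ t) (φ (h t) x) < ε

/-- The chain recurrent set of a flow. -/
def CR {Λ : Type*} [MetricSpace Λ] (φ : ℝ → Λ → Λ) : Set Λ :=
  {x | ∀ d > 0, ∀ T > 0, ∃ ξ : ℝ → Λ, IsPseudo φ d ξ ∧ ξ 0 = x ∧ ∃ t ≥ T, ξ t = x}

section

variable {Λ : Type*} [MetricSpace Λ] {φ : ℝ → Λ → Λ}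

theorem IsPseudo.mono {d d' : ℝ} {ξ : ℝ → Λ} (h : IsPseudo φ d ξ) (hdd' : d ≤ d') :
    IsPseudo φ d' ξ :=
  fun t s hs => (h t s hs).trans_le hdd'

namespace IsFlow

theorem map_add (hφ : IsFlow φ) (s t : ℝ) (x : Λ) : φ (s + t) x = φ s (φ t x) :=
  hφ.2.2 s t x

def periods (hφ : IsFlow φ) (p : Λ) : AddSubgroup ℝ where
  carrier := {t | φ t p = p}
  add_mem' {s t} hs ht := show φ (s + t) p = p by rw [hφ.map_add, ht, hs]
  zero_mem' := hφ.2.1 p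
  neg_mem' {t} ht := by
    have h := hφ.map_add (-t) t p
    rw [neg_add_cancel, hφ.2.1, ht] at h
    exact h.symm

theorem exists_add_apply_eq_of_periodic (hφ : IsFlow φ) {p : Λ} {T : ℝ} (hT : 0 < T)
    (hper : φ T p = p) (a b L : ℝ) : ∃ c, |c - L| ≤ T / 2 ∧ φ (c + a) p = φ b p := by
  set k := round ((L - (b - a)) / T)
  refine ⟨b - a + k * T, ?_, ?_⟩
  · calc |b - a + k * T - L| = T * |(L - (b - a)) / T - k| := by
          rw [← abs_of_pos hT, ← abs_mul, abs_of_pos hT, ← abs_neg]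
          congr 1
          field_simp
          ring
      _ ≤ T * (1 / 2) := by gcongr; exact abs_sub_round _
      _ = T / 2 := by ring
  · have hk : φ (k * T) p = p := by
      have hkT := (hφ.periods p).zsmul_mem hper k
      rwa [zsmul_eq_mul] at hkT
    rw [show b - a + k * T + a = b + k * T by ring, hφ.map_add, hk]

theorem exists_speed_apply_eq_of_periodic (hφ : IsFlow φ) {p : Λ} {T κ L : ℝ} (hT : 0 < T)
    (hper : φ T p = p) (hκ : 0 < κ) (hL : T / κ ≤ L) (a b : ℝ) :
    ∃ σ, |σ - 1| < κ ∧ φ (σ * L + a) p = φ b p := by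
  obtain ⟨c, hc, hcab⟩ := hφ.exists_add_apply_eq_of_periodic hT hper a b L
  have hL0 : 0 < L := (div_pos hT hκ).trans_le hL
  refine ⟨c / L, ?_, by rwa [div_mul_cancel₀ _ hL0.ne']⟩
  have hTL : T ≤ κ * L := by rwa [div_le_iff₀ hκ, mul_comm] at hL
  rw [show c / L - 1 = (c - L) / L by field_simp, abs_div, abs_of_pos hL0, div_lt_iff₀ hL0]
  linarith

theorem exists_pos_forall_dist_lt [CompactSpace Λ] (hφ : IsFlow φ) {K : Set ℝ}
    (hK : IsCompact K) {ε : ℝ} (hε : 0 < ε) :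
    ∃ η > 0, ∀ s ∈ K, ∀ s' ∈ K, ∀ x y : Λ,
      |s - s'| < η → dist x y < η → dist (φ s x) (φ s' y) < ε := by
  obtain ⟨η, hη, h⟩ := Metric.uniformContinuousOn_iff.1
    ((hK.prod isCompact_univ).uniformContinuousOn_of_continuous hφ.1.continuousOn) ε hε
  refine ⟨η, hη, fun s hs s' hs' x y hss' hxy => h (s, x) ⟨hs, trivial⟩ (s', y) ⟨hs', trivial⟩ ?_⟩
  rw [Prod.dist_eq, Real.dist_eq]
  exact max_lt hss' hxy

theorem exists_pos_isPseudo_rescaled [CompactSpace Λ] (hφ : IsFlow φ) {ε : ℝ} (hε : 0 < ε) :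
    ∃ κ > 0, ∀ σ, |σ - 1| < κ → ∀ (c : ℝ) (x : Λ), IsPseudo φ ε fun t => φ (σ * t + c) x := by
  obtain ⟨η, hη, h⟩ := hφ.exists_pos_forall_dist_lt (isCompact_Icc (a := 0) (b := 2)) hε
  refine ⟨min η 1, by positivity, fun σ hσ c x t s hs => ?_⟩
  obtain ⟨hs0, hs1⟩ := hs
  have hσ1 := abs_lt.1 (hσ.trans_le (min_le_right _ _))
  show dist (φ (σ * (t + s) + c) x) (φ s (φ (σ * t + c) x)) < ε
  rw [show σ * (t + s) + c = σ * s + (σ * t + c) by ring, hφ.map_add]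
  refine h _ ⟨by nlinarith, by nlinarith⟩ s ⟨hs0, by linarith⟩ _ _ ?_ (by simpa using hη)
  calc |σ * s - s| = |σ - 1| * s := by rw [← sub_one_mul, abs_mul, abs_of_nonneg hs0]
    _ ≤ |σ - 1| := mul_le_of_le_one_right (abs_nonneg _) hs1
    _ < η := hσ.trans_le (min_le_left _ _)

theorem exists_pos_isPseudo_orbit_segment [CompactSpace Λ] (hφ : IsFlow φ) {p : Λ} {T ε : ℝ}
    (hT : 0 < T) (hper : φ T p = p) (hε : 0 < ε) :
    ∃ κ > 0, ∀ a b t₁ t₂ : ℝ, T / κ ≤ t₂ - t₁ → ∃ ω : ℝ → Λ, IsPseudo φ ε ω ∧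
      ω t₁ = φ a p ∧ ω t₂ = φ b p ∧ ∀ t, ω t ∈ range fun t => φ t p := by
  obtain ⟨κ, hκ, hrescaled⟩ := hφ.exists_pos_isPseudo_rescaled hε
  refine ⟨κ, hκ, fun a b t₁ t₂ hL => ?_⟩
  obtain ⟨σ, hσ, hσab⟩ := hφ.exists_speed_apply_eq_of_periodic hT hper hκ hL a b
  refine ⟨fun t => φ (σ * t + (a - σ * t₁)) p, hrescaled σ hσ _ p,
    by simp only [add_sub_cancel], ?_, fun t => mem_range_self _⟩
  rw [← hσab]
  ring_nf

end IsFlow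

variable {d η ε τ : ℝ} {ζ₁ ζ₂ : ℝ → Λ}

theorem IsPseudo.dist_lt_of_le_of_le (hφ : IsFlow φ)
    (hmod : ∀ u ∈ Icc (0 : ℝ) 1, ∀ x y : Λ, dist x y < η → dist (φ u x) (φ u y) < ε)
    (h₁ : IsPseudo φ d ζ₁) (h₂ : IsPseudo φ d ζ₂) (hτ : dist (ζ₁ τ) (ζ₂ τ) + d ≤ η)
    {t s : ℝ} (hs : s ≤ 1) (ht : t ≤ τ) (hts : τ ≤ t + s) :
    dist (ζ₂ (t + s)) (φ s (ζ₁ t)) < d + ε := by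
  have hr : τ - t ∈ Icc (0 : ℝ) 1 := ⟨by linarith, by linarith⟩
  have hu : t + s - τ ∈ Icc (0 : ℝ) 1 := ⟨by linarith, by linarith⟩
  have hnear : dist (ζ₂ τ) (φ (τ - t) (ζ₁ t)) < η := calc
    dist (ζ₂ τ) (φ (τ - t) (ζ₁ t))
        ≤ dist (ζ₁ τ) (ζ₂ τ) + dist (ζ₁ (t + (τ - t))) (φ (τ - t) (ζ₁ t)) := by
          rw [add_sub_cancel, dist_comm (ζ₁ τ)]
          exact dist_triangle _ _ _
    _ < dist (ζ₁ τ) (ζ₂ τ) + d := by linarith [h₁ t (τ - t) hr]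
    _ ≤ η := hτ
  calc dist (ζ₂ (t + s)) (φ s (ζ₁ t))
      = dist (ζ₂ (τ + (t + s - τ))) (φ (t + s - τ) (φ (τ - t) (ζ₁ t))) := by
        rw [← hφ.map_add, add_sub_cancel, sub_add_sub_cancel, add_sub_cancel_left]
    _ ≤ dist (ζ₂ (τ + (t + s - τ))) (φ (t + s - τ) (ζ₂ τ))
          + dist (φ (t + s - τ) (ζ₂ τ)) (φ (t + s - τ) (φ (τ - t) (ζ₁ t))) :=
        dist_triangle _ _ _
    _ < d + ε := add_lt_add (h₂ τ _ hu) (hmod _ hu _ _ hnear)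

theorem IsPseudo.glue (hφ : IsFlow φ) {ξ : ℝ → Λ} (hε : 0 ≤ ε)
    (hmod : ∀ u ∈ Icc (0 : ℝ) 1, ∀ x y : Λ, dist x y < η → dist (φ u x) (φ u y) < ε)
    (h₁ : IsPseudo φ d ζ₁) (h₂ : IsPseudo φ d ζ₂) (hτ : dist (ζ₁ τ) (ζ₂ τ) + d ≤ η)
    (hξ : ∀ t, t ≤ τ ∧ ξ t = ζ₁ t ∨ τ ≤ t ∧ ξ t = ζ₂ t) : IsPseudo φ (d + ε) ξ := by
  intro t s hs
  rcases hξ t with ⟨ht, e⟩ | ⟨ht, e⟩ <;> rcases hξ (t + s) with ⟨hts, e'⟩ | ⟨hts, e'⟩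
  · rw [e, e']
    linarith [h₁ t s hs]
  · rw [e, e']
    exact h₁.dist_lt_of_le_of_le hφ hmod h₂ hτ hs.2 ht hts
  · obtain rfl : s = 0 := by linarith [hs.1]
    have h := h₁ t 0 hs
    rw [add_zero] at e' h ⊢
    rw [e']
    linarith
  · rw [e, e']
    linarith [h₂ t s hs]

theorem IsFlow.exists_pos_isPseudo_glue [CompactSpace Λ] (hφ : IsFlow φ) {d₀ : ℝ}
    (hd₀ : 0 < d₀) :
    ∃ d > 0, ∀ (τ : ℝ) (ζ₁ ζ₂ ξ : ℝ → Λ), IsPseudo φ d ζ₁ → IsPseudo φ d ζ₂ →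
      dist (ζ₁ τ) (ζ₂ τ) < d → (∀ t, t ≤ τ ∧ ξ t = ζ₁ t ∨ τ ≤ t ∧ ξ t = ζ₂ t) →
      IsPseudo φ d₀ ξ := by
  obtain ⟨η, hη, hmod⟩ :=
    hφ.exists_pos_forall_dist_lt (isCompact_Icc (a := 0) (b := 1)) (half_pos hd₀)
  refine ⟨min (η / 2) (d₀ / 2), by positivity, fun τ ζ₁ ζ₂ ξ h₁ h₂ hτ hξ => ?_⟩
  have hmod' : ∀ u ∈ Icc (0 : ℝ) 1, ∀ x y : Λ, dist x y < η → dist (φ u x) (φ u y) < d₀ / 2 :=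
    fun u hu x y hxy => hmod u hu u hu x y (by simpa using hη) hxy
  refine (IsPseudo.glue hφ (half_pos hd₀).le hmod' h₁ h₂ ?_ hξ).mono ?_
  · linarith [min_le_left (η / 2) (d₀ / 2)]
  · linarith [min_le_right (η / 2) (d₀ / 2)]

end

theorem connect_pseudotrajectories_through_closed_orbit_general
    {Λ : Type*} [MetricSpace Λ] [CompactSpace Λ]
    (φ : ℝ → Λ → Λ) (hφ : IsFlow φ)
    (p : Λ) (T₀ : ℝ) (hT₀ : 0 < T₀) (hper : φ T₀ p = p)
    (γ : Set Λ) (hγ : γ = Set.range fun t : ℝ => φ t p)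
    (d₀ : ℝ) (hd₀ : 0 < d₀) :
    ∃ d₁ > 0, ∀ ξ₁ ξ₂ : ℝ → Λ, IsPseudo φ d₁ ξ₁ → IsPseudo φ d₁ ξ₂ →
      ∀ t₁ t₂ : ℝ, T₀ / d₁ ≤ t₂ - t₁ →
        Metric.infDist (ξ₁ t₁) γ < d₁ → Metric.infDist (ξ₂ t₂) γ < d₁ →
        ∃ ξ : ℝ → Λ, IsPseudo φ d₀ ξ ∧ (∀ t ≤ t₁, ξ t = ξ₁ t) ∧
          (∀ t, t₂ ≤ t → ξ t = ξ₂ t) ∧ ∀ t ∈ Set.Ioo t₁ t₂, ξ t ∈ γ := by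
  obtain ⟨d₂, hd₂, glue₂⟩ := hφ.exists_pos_isPseudo_glue hd₀
  obtain ⟨d₃, hd₃, glue₃⟩ := hφ.exists_pos_isPseudo_glue hd₂
  obtain ⟨κ, hκ, segment⟩ := hφ.exists_pos_isPseudo_orbit_segment hT₀ hper hd₃
  refine ⟨min (min d₂ d₃) κ, by positivity, fun ξ₁ ξ₂ h₁ h₂ t₁ t₂ hL hi₁ hi₂ => ?_⟩
  have hd₁₂ : min (min d₂ d₃) κ ≤ d₂ := (min_le_left _ _).trans (min_le_left _ _)
  have hd₁₃ : min (min d₂ d₃) κ ≤ d₃ := (min_le_left _ _).trans (min_le_right _ _)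
  have ht₁₂ : t₁ < t₂ := by linarith [div_pos hT₀ (lt_min (lt_min hd₂ hd₃) hκ)]
  subst hγ
  obtain ⟨_, ⟨a, rfl⟩, ha⟩ := (infDist_lt_iff (range_nonempty _)).1 hi₁
  obtain ⟨_, ⟨b, rfl⟩, hb⟩ := (infDist_lt_iff (range_nonempty _)).1 hi₂
  obtain ⟨ω, hω, hω₁, hω₂, hωγ⟩ := segment a b t₁ t₂
    (hL.trans' (div_le_div_of_nonneg_left hT₀.le (by positivity) (min_le_right _ _)))
  set ξ' : ℝ → Λ := fun t => if t ≤ t₁ then ξ₁ t else ω t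
  have h' : IsPseudo φ d₂ ξ' := glue₃ t₁ ξ₁ ω ξ' (h₁.mono hd₁₃) hω
    (by rw [hω₁]; exact ha.trans_le hd₁₃) (by grind)
  refine ⟨fun t => if t < t₂ then ξ' t else ξ₂ t, glue₂ t₂ ξ' ξ₂ _ h' (h₂.mono hd₁₂) ?_ ?_,
    fun t ht => ?_, fun t ht => if_neg (not_lt.2 ht), fun t ht => ?_⟩
  · simp only [ξ', if_neg (not_le.2 ht₁₂), hω₂]
    exact (dist_comm _ _).trans_lt (hb.trans_le hd₁₂)
  · grind
  · simp only [ξ', if_pos (ht.trans_lt ht₁₂), if_pos ht]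
  · simp only [ξ', if_pos ht.2, if_neg (not_le.2 ht.1)]
    exact hωγ t

/-- Lemma 5.1: pseudotrajectories passing near a closed orbit `γ` and separated in time by at
least `T₀/d₁` can be connected through `γ`, yielding a `d₀`-pseudotrajectory. -/
theorem connect_pseudotrajectories_through_closed_orbit
    {Λ : Type*} [MetricSpace Λ] [CompactSpace Λ]
    (φ : ℝ → Λ → Λ) (hφ : IsFlow φ)
    (p : Λ) (T₀ : ℝ) (hT₀ : 0 < T₀) (hper : φ T₀ p = p)
    (hmin : ∀ t ∈ Set.Ioo 0 T₀, φ t p ≠ p)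
    (γ : Set Λ) (hγ : γ = Set.range fun t : ℝ => φ t p)
    (d₀ : ℝ) (hd₀ : 0 < d₀) :
    ∃ d₁ > 0, ∀ ξ₁ ξ₂ : ℝ → Λ, IsPseudo φ d₁ ξ₁ → IsPseudo φ d₁ ξ₂ →
      ∀ t₁ t₂ : ℝ, T₀ / d₁ ≤ t₂ - t₁ →
        Metric.infDist (ξ₁ t₁) γ < d₁ → Metric.infDist (ξ₂ t₂) γ < d₁ →
        ∃ ξ : ℝ → Λ, IsPseudo φ d₀ ξ ∧ (∀ t ≤ t₁, ξ t = ξ₁ t) ∧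
          (∀ t, t₂ ≤ t → ξ t = ξ₂ t) ∧ ∀ t ∈ Set.Ioo t₁ t₂, ξ t ∈ γ :=
  connect_pseudotrajectories_through_closed_orbit_general φ hφ p T₀ hT₀ hper γ hγ d₀ hd₀
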